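/- In the choice-gadget graph built from finite nonempty sets of integers X₁, …, X_k, an integer W greater than every element of every X_i, and a real β with 0 < β < 1: for every choice (x₁, …, x_k) ∈ X₁ × ⋯ × X_k, the corresponding s–t path (going through u_{i,x_i} in the i-th gadget) has cost ∑_{i=1}^{k} ( x_i + (W − x_i)/β ); moreover, for any integer T, setting Y = T·(1 − 1/β) + k·W/β, the choice-gadget graph contains a directed s–t path of cost Y if and only if there exist x_i ∈ X_i for each i with ∑_{i=1}^{k} x_i = T. -/

import Mathlib

/-!
Common definitions for time-inconsistent planning models (Kleinberg–Oren).
A task graph is given by a finite vertex type `V`, an edge relation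
`E : V → V → Prop` and edge weights `w : V → V → ℝ`.  A directed path is
represented by the list of its vertices (nonempty, consecutive vertices joined
by edges, no repeated vertices).
-/

variable {V : Type*}

/-- The (real) cost of a path: the sum of the weights of its edges. -/
def pathCost (w : V → V → ℝ) (p : List V) : ℝ :=
  ((p.zip p.tail).map fun e => w e.1 e.2).sum

/-- `p` is a directed path from `a` to `b` in the graph with edge relation `E`. -/
def IsPathOn (E : V → V → Prop) (a b : V) (p : List V) : Prop :=
  p.head? = some a ∧ p.getLast? = some b ∧ p.Chain' E ∧ p.Nodup

/-- The perceived cost of a path with present bias `β`: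
the weight of the first edge plus `β` times the total weight of the rest. -/
def perceived (w : V → V → ℝ) (β : ℝ) (p : List V) : ℝ :=
  match p.zip p.tail with
  | [] => 0
  | e :: es => w e.1 e.2 + β * ((es.map fun e' => w e'.1 e'.2).sum)

/-- The edge `a → b` is a feasible transition (towards target `t`): it is the
first edge of some `a`–`t` path whose perceived cost is minimum among all
`a`–`t` paths. -/
def FeasibleStep (E : V → V → Prop) (w : V → V → ℝ) (β : ℝ) (t : V) (a b : V) : Prop :=
  E a b ∧ ∃ q : List V, IsPathOn E a t (a :: b :: q) ∧
    ∀ r : List V, IsPathOn E a t r → perceived w β (a :: b :: q) ≤ perceived w β r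

/-- A feasible `s`–`t` path: every edge on it is a feasible transition from its tail. -/
def FeasPath (E : V → V → Prop) (w : V → V → ℝ) (β : ℝ) (s t : V) (p : List V) : Prop :=
  IsPathOn E s t p ∧ p.Chain' (FeasibleStep E w β t)

/-- The directed graph is acyclic: no directed cycle. -/
def NoDirCycle (E : V → V → Prop) : Prop := ∀ v, ¬ Relation.TransGen E v v

/-- Vertices of the choice-gadget graph built from the finite sets
`X 0, …, X (k-1)` of integers: `v i` for `i ∈ {0,…,k}` and, for each gadget
`i ∈ {1,…,k}` (indexed by `Fin k`, gadget `i` ↔ index `i-1`) and each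
`x ∈ X (i-1)`, a middle vertex `u (i-1) x`. -/
inductive CV (k : ℕ) (X : Fin k → Finset ℤ) : Type
  | v (i : Fin (k + 1))
  | u (i : Fin k) (x : {z : ℤ // z ∈ X i})

/-- Edges of the choice-gadget graph: `v_{i-1} → u_{i,x}` and `u_{i,x} → v_i`
for every `x ∈ X_i`. -/
def CE (k : ℕ) (X : Fin k → Finset ℤ) : CV k X → CV k X → Prop
  | CV.v j, CV.u i _ => (j : ℕ) = (i : ℕ)
  | CV.u i _, CV.v j => (j : ℕ) = (i : ℕ) + 1
  | _, _ => False

/-- Edge weights of the choice-gadget graph: `v_{i-1} → u_{i,x}` has weight `x`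
and `u_{i,x} → v_i` has weight `(W - x)/β`. -/
noncomputable def Cw (k : ℕ) (X : Fin k → Finset ℤ) (W : ℤ) (β : ℝ) :
    CV k X → CV k X → ℝ
  | CV.v _, CV.u _ x => ((x : ℤ) : ℝ)
  | CV.u _ x, CV.v _ => ((W : ℝ) - ((x : ℤ) : ℝ)) / β
  | _, _ => 0

/-- The `s`–`t` path of the choice-gadget graph corresponding to a choice
`(x₁,…,x_k) ∈ X₁ × ⋯ × X_k`: it goes through `u_{i,x_i}` in the `i`-th gadget. -/
def Cpath (k : ℕ) (X : Fin k → Finset ℤ) (f : ∀ i : Fin k, {z : ℤ // z ∈ X i}) :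
    List (CV k X) :=
  ((List.finRange k).flatMap fun i => [CV.v i.castSucc, CV.u i (f i)]) ++ [CV.v (Fin.last k)]

/-!
Every edge of the choice-gadget graph raises the rank `v_i ↦ 2i`, `u_{i,x} ↦ 2i - 1`, so every
walk is a path, and an `s`–`t` path passes through exactly one middle vertex
`u_{i,x_i}` of each gadget. Its cost is then
`∑ (x_i + (W - x_i)/β) = (∑ x_i)(1 - 1/β) + kW/β`, and since `β ≠ 1` this equals
`T(1 - 1/β) + kW/β` exactly when `∑ x_i = T`.
-/

open Finset

theorem pathCost_cons_cons (w : V → V → ℝ) (a b : V) (l : List V) :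
    pathCost w (a :: b :: l) = w a b + pathCost w (b :: l) := by
  simp [pathCost]

theorem pathCost_singleton (w : V → V → ℝ) (a : V) : pathCost w [a] = 0 := by
  simp [pathCost]

theorem List.IsChain.nodup_of_lt_rank {α : Type*} {R : α → α → Prop} (rank : α → ℕ)
    (hR : ∀ ⦃a b⦄, R a b → rank a < rank b) {l : List α} (hl : l.IsChain R) : l.Nodup :=
  .of_map rank ((List.isChain_map rank).2 (hl.imp hR)).pairwise.nodup

theorem Fin.sum_filter_le_eq_add {M : Type*} [AddCommMonoid M] {k : ℕ} (g : Fin k → M)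
    (i : Fin k) :
    ∑ i' ∈ univ.filter (fun i' : Fin k => (i : ℕ) ≤ i'), g i' =
      g i + ∑ i' ∈ univ.filter (fun i' : Fin k => (i : ℕ) + 1 ≤ i'), g i' := by
  rw [← Finset.sum_insert (by simp)]
  congr 1
  ext i'
  simp only [Finset.mem_filter, Finset.mem_univ, true_and, Finset.mem_insert, Fin.ext_iff]
  omega

namespace ChoiceGadget

noncomputable def gadgetCost (W : ℤ) (β : ℝ) (x : ℤ) : ℝ := x + (W - x) / β

theorem sum_gadgetCost {ι : Type*} [Fintype ι] (W : ℤ) (β : ℝ) (y : ι → ℤ) :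
    ∑ i, gadgetCost W β (y i) =
      ((∑ i, y i : ℤ) : ℝ) * (1 - 1 / β) + (Fintype.card ι : ℝ) * W / β := by
  simp only [gadgetCost, div_eq_mul_inv, Finset.sum_add_distrib, ← Finset.sum_mul,
    Finset.sum_sub_distrib, Finset.sum_const, Finset.card_univ, nsmul_eq_mul, Int.cast_sum]
  ring

theorem sum_gadgetCost_eq_iff {ι : Type*} [Fintype ι] (W T : ℤ) {β : ℝ} (hβ : β ≠ 1)
    (y : ι → ℤ) :
    ∑ i, gadgetCost W β (y i) = (T : ℝ) * (1 - 1 / β) + (Fintype.card ι : ℝ) * W / β ↔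
      ∑ i, y i = T := by
  have hβ' : (1 : ℝ) - 1 / β ≠ 0 := sub_ne_zero.2 (by simpa [eq_comm] using hβ.symm)
  rw [sum_gadgetCost, add_left_inj, mul_left_inj' hβ', Int.cast_inj]

variable {k : ℕ} {X : Fin k → Finset ℤ}

def rank : CV k X → ℕ
  | CV.v i => 2 * i
  | CV.u i _ => 2 * i + 1

theorem rank_lt_of_CE : ∀ {a b : CV k X}, CE k X a b → rank a < rank b
  | CV.v _, CV.u _ _, h | CV.u _ _, CV.v _, h => by simp only [CE, rank] at h ⊢; omega

theorem nodup_of_isChain {p : List (CV k X)} (hp : p.IsChain (CE k X)) : p.Nodup :=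
  hp.nodup_of_lt_rank rank fun _ _ => rank_lt_of_CE

def cpathFrom (f : ∀ i : Fin k, {z : ℤ // z ∈ X i}) (j : ℕ) : List (CV k X) :=
  (((List.finRange k).drop j).flatMap fun i => [CV.v i.castSucc, CV.u i (f i)]) ++
    [CV.v (Fin.last k)]

variable (f : ∀ i : Fin k, {z : ℤ // z ∈ X i})

theorem cpathFrom_zero : cpathFrom f 0 = Cpath k X f := rfl

theorem cpathFrom_of_lt {j : ℕ} (hj : j < k) :
    cpathFrom f j = CV.v ⟨j, by omega⟩ :: CV.u ⟨j, hj⟩ (f ⟨j, hj⟩) :: cpathFrom f (j + 1) := by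
  rw [cpathFrom, List.drop_eq_getElem_cons (by simpa using hj)]
  simp [cpathFrom, Fin.castSucc]

theorem cpathFrom_of_le {j : ℕ} (hj : k ≤ j) : cpathFrom f j = [CV.v (Fin.last k)] := by
  simp [cpathFrom, List.drop_eq_nil_of_le, hj]

theorem head?_cpathFrom {j : ℕ} (hj : j ≤ k) :
    (cpathFrom f j).head? = some (CV.v ⟨j, by omega⟩) := by
  rcases hj.lt_or_eq with hj | rfl
  · simp [cpathFrom_of_lt f hj]
  · simp [cpathFrom_of_le f le_rfl, Fin.last]

theorem getLast?_cpathFrom (j : ℕ) : (cpathFrom f j).getLast? = some (CV.v (Fin.last k)) := by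
  simp [cpathFrom]

theorem isChain_cpathFrom (j : ℕ) : (cpathFrom f j).IsChain (CE k X) := by
  rcases lt_or_ge j k with hj | hj
  · rw [cpathFrom_of_lt f hj, List.isChain_cons_cons, List.isChain_cons,
      head?_cpathFrom f (by omega : j + 1 ≤ k)]
    exact ⟨rfl, by simp [CE], isChain_cpathFrom (j + 1)⟩
  · rw [cpathFrom_of_le f hj]
    exact List.isChain_singleton _
termination_by k - j

theorem pathCost_cpathFrom (W : ℤ) (β : ℝ) (j : ℕ) :
    pathCost (Cw k X W β) (cpathFrom f j) =
      ∑ i ∈ univ.filter (fun i : Fin k => j ≤ i), gadgetCost W β (f i) := by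
  rcases lt_or_ge j k with hj | hj
  · obtain ⟨l, hl⟩ := List.head?_eq_some_iff.1 (head?_cpathFrom f (by omega : j + 1 ≤ k))
    rw [cpathFrom_of_lt f hj, hl, pathCost_cons_cons, pathCost_cons_cons, ← hl,
      pathCost_cpathFrom W β (j + 1), Fin.sum_filter_le_eq_add _ ⟨j, hj⟩]
    simp only [Cw, gadgetCost]
    ring
  · rw [cpathFrom_of_le f hj, pathCost_singleton, eq_comm]
    exact Finset.sum_eq_zero fun i hi => by simp at hi; omega
termination_by k - j

theorem isPathOn_Cpath :
    IsPathOn (CE k X) (CV.v 0) (CV.v (Fin.last k)) (Cpath k X f) := by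
  rw [← cpathFrom_zero]
  exact ⟨head?_cpathFrom f (Nat.zero_le k), getLast?_cpathFrom f 0, isChain_cpathFrom f 0,
    nodup_of_isChain (isChain_cpathFrom f 0)⟩

theorem pathCost_Cpath (W : ℤ) (β : ℝ) :
    pathCost (Cw k X W β) (Cpath k X f) = ∑ i, gadgetCost W β (f i) := by
  simp [← cpathFrom_zero, pathCost_cpathFrom]

theorem exists_pathCost_eq_of_isChain (W : ℤ) (β : ℝ) :
    ∀ (j : Fin (k + 1)) (l : List (CV k X)), (CV.v j :: l).IsChain (CE k X) →
      (CV.v j :: l).getLast? = some (CV.v (Fin.last k)) →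
      ∃ x : Fin k → ℤ, (∀ i : Fin k, (j : ℕ) ≤ i → x i ∈ X i) ∧
        pathCost (Cw k X W β) (CV.v j :: l) =
          ∑ i ∈ univ.filter (fun i : Fin k => (j : ℕ) ≤ i), gadgetCost W β (x i)
  | j, [], _, hlast => by
    obtain rfl : j = Fin.last k := by simp at hlast; exact hlast
    refine ⟨0, fun i hi => absurd hi (by simp), ?_⟩
    rw [pathCost_singleton, eq_comm]
    exact Finset.sum_eq_zero fun i hi => by simp at hi; omega
  | _, [CV.u _ _], _, hlast => by simp at hlast
  | j, CV.u i a :: CV.v j' :: l, hchain, hlast => by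
    rw [List.isChain_cons_cons, List.isChain_cons_cons] at hchain
    obtain ⟨hji, hij', hchain⟩ := hchain
    simp only [CE] at hji hij'
    obtain ⟨x, hxX, hx⟩ :=
      exists_pathCost_eq_of_isChain W β j' l hchain (by simpa using hlast)
    refine ⟨Function.update x i a, fun i' hi' => ?_, ?_⟩
    · rcases eq_or_ne i' i with rfl | hne
      · rw [Function.update_self]
        exact a.2
      · rw [Function.update_of_ne hne]
        exact hxX i' (by rw [hij']; have := Fin.val_ne_of_ne hne; omega)
    · have hrest : ∑ i' ∈ univ.filter (fun i' : Fin k => (j' : ℕ) ≤ i'),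
          gadgetCost W β (Function.update x i a i') =
          ∑ i' ∈ univ.filter (fun i' : Fin k => (j' : ℕ) ≤ i'), gadgetCost W β (x i') :=
        Finset.sum_congr rfl fun i' hi' => by
          rw [Function.update_of_ne (Fin.ne_of_val_ne (by simp at hi'; omega))]
      rw [pathCost_cons_cons, pathCost_cons_cons, hx, hji, Fin.sum_filter_le_eq_add, ← hij',
        hrest, Function.update_self]
      simp only [Cw, gadgetCost]
      ring
  | _, CV.v _ :: _, hchain, _ | _, CV.u _ _ :: CV.u _ _ :: _, hchain, _ => by
    simp [List.isChain_cons_cons, CE] at hchain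

theorem exists_pathCost_eq_of_isPathOn (W : ℤ) (β : ℝ) {p : List (CV k X)}
    (hp : IsPathOn (CE k X) (CV.v 0) (CV.v (Fin.last k)) p) :
    ∃ x : Fin k → ℤ, (∀ i, x i ∈ X i) ∧ pathCost (Cw k X W β) p = ∑ i, gadgetCost W β (x i) := by
  obtain ⟨hhead, hlast, hchain, -⟩ := hp
  obtain ⟨l, rfl⟩ := List.head?_eq_some_iff.1 hhead
  obtain ⟨x, hxX, hx⟩ := exists_pathCost_eq_of_isChain W β 0 l hchain hlast
  exact ⟨x, fun i => hxX i (Nat.zero_le _), by simpa using hx⟩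

end ChoiceGadget

open ChoiceGadget in
theorem stmt13_general (k : ℕ) (X : Fin k → Finset ℤ)
    (W : ℤ) (β : ℝ) (hβ1 : β < 1)
    (T : ℤ) :
    (∀ f : ∀ i : Fin k, {z : ℤ // z ∈ X i},
      IsPathOn (CE k X) (CV.v 0) (CV.v (Fin.last k)) (Cpath k X f) ∧
      pathCost (Cw k X W β) (Cpath k X f) =
        ∑ i : Fin k, (((f i : ℤ) : ℝ) + ((W : ℝ) - ((f i : ℤ) : ℝ)) / β)) ∧
    ((∃ p : List (CV k X), IsPathOn (CE k X) (CV.v 0) (CV.v (Fin.last k)) p ∧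
        pathCost (Cw k X W β) p = (T : ℝ) * (1 - 1 / β) + (k : ℝ) * (W : ℝ) / β) ↔
      ∃ f : ∀ i : Fin k, {z : ℤ // z ∈ X i}, (∑ i : Fin k, (f i : ℤ)) = T) := by
  have hY (y : Fin k → ℤ) := Fintype.card_fin k ▸ sum_gadgetCost_eq_iff W T hβ1.ne y
  refine ⟨fun f => ⟨isPathOn_Cpath f, pathCost_Cpath f W β⟩, ?_, ?_⟩
  · rintro ⟨p, hp, hcost⟩
    obtain ⟨x, hxX, hx⟩ := exists_pathCost_eq_of_isPathOn W β hp
    exact ⟨fun i => ⟨x i, hxX i⟩, (hY x).1 (hx ▸ hcost)⟩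
  · rintro ⟨f, hf⟩
    exact ⟨Cpath k X f, isPathOn_Cpath f, (pathCost_Cpath f W β).trans ((hY _).2 hf)⟩

/-- In the choice-gadget graph: for every choice
`(x₁,…,x_k) ∈ X₁ × ⋯ × X_k` the corresponding `s`–`t` path has cost
`∑ᵢ (xᵢ + (W - xᵢ)/β)`; moreover, for every integer `T`, with
`Y = T·(1 - 1/β) + k·W/β` the graph has a directed `s`–`t` path of cost `Y`
iff there are `xᵢ ∈ Xᵢ` with `∑ᵢ xᵢ = T`. -/
theorem stmt13 (k : ℕ) (X : Fin k → Finset ℤ) (hX : ∀ i, (X i).Nonempty)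
    (W : ℤ) (hW : ∀ i, ∀ x ∈ X i, x < W) (β : ℝ) (hβ0 : 0 < β) (hβ1 : β < 1)
    (T : ℤ) :
    (∀ f : ∀ i : Fin k, {z : ℤ // z ∈ X i},
      IsPathOn (CE k X) (CV.v 0) (CV.v (Fin.last k)) (Cpath k X f) ∧
      pathCost (Cw k X W β) (Cpath k X f) =
        ∑ i : Fin k, (((f i : ℤ) : ℝ) + ((W : ℝ) - ((f i : ℤ) : ℝ)) / β)) ∧
    ((∃ p : List (CV k X), IsPathOn (CE k X) (CV.v 0) (CV.v (Fin.last k)) p ∧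
        pathCost (Cw k X W β) p = (T : ℝ) * (1 - 1 / β) + (k : ℝ) * (W : ℝ) / β) ↔
      ∃ f : ∀ i : Fin k, {z : ℤ // z ∈ X i}, (∑ i : Fin k, (f i : ℤ)) = T) :=
  stmt13_general k X W β hβ1 T
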